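/- arXiv:0905.1248 — 2 statements merged into one kernel-verified Lean document; each statement's English description precedes it below -/
import Mathlib

section
/- Every unary language accepted by a deterministic pushdown automaton in normal form with n states and m stack symbols is accepted by a one-way deterministic finite automaton with at most 2^{nm} states. -/
/-- A move of a unary pushdown automaton in normal form: read `a` (stack
unchanged), read nothing / ε state change (stack unchanged), pop the top
symbol, or push one symbol. -/
inductive PMove (Q Γ : Type*) where
  | readA (p : Q)
  | readE (p : Q)
  | pop (p : Q)
  | push (p : Q) (B : Γ)

/-- A unary pushdown automaton in normal form over the one-letter alphabet
`{a}`, accepting by final states. Nondeterminism is allowed (`δ` is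
set-valued); determinism is the predicate `UPDA.Deterministic`. -/
structure UPDA (Q Γ : Type*) where
  start : Q
  Z0 : Γ
  final : Set Q
  δ : Q → Γ → Set (PMove Q Γ)

namespace UPDA

variable {Q Γ : Type*}

/-- Configurations are `(state, number of input symbols consumed so far, stack)`
with the stack top leftmost. One computation step. -/
inductive Step (M : UPDA Q Γ) : Q × ℕ × List Γ → Q × ℕ × List Γ → Prop
  | readA {q n A γ p} : PMove.readA p ∈ M.δ q A →
      Step M (q, n, A :: γ) (p, n + 1, A :: γ)
  | readE {q n A γ p} : PMove.readE p ∈ M.δ q A →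
      Step M (q, n, A :: γ) (p, n, A :: γ)
  | pop {q n A γ p} : PMove.pop p ∈ M.δ q A →
      Step M (q, n, A :: γ) (p, n, γ)
  | push {q n A γ p B} : PMove.push p B ∈ M.δ q A →
      Step M (q, n, A :: γ) (p, n, B :: A :: γ)

/-- Reachability in zero or more steps; `M.Reaches (q, 0, γ) (p, k, γ')` means
`(q, a^k, γ) ⊢* (p, ε, γ')` in the notation of the paper. -/
def Reaches (M : UPDA Q Γ) : Q × ℕ × List Γ → Q × ℕ × List Γ → Prop :=
  Relation.ReflTransGen M.Step

/-- Determinism: at most one move from each mode (for a unary alphabet this is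
equivalent to the usual two dpda conditions). -/
def Deterministic (M : UPDA Q Γ) : Prop :=
  ∀ q A m₁ m₂, m₁ ∈ M.δ q A → m₂ ∈ M.δ q A → m₁ = m₂

/-- Remaining normal form conditions: `Z0` is never pushed nor popped. -/
def NormalForm (M : UPDA Q Γ) : Prop :=
  (∀ q A p, PMove.push p M.Z0 ∉ M.δ q A) ∧ (∀ q p, PMove.pop p ∉ M.δ q M.Z0)

/-- Acceptance by final states: `a^n` is accepted iff some configuration with
all `n` symbols consumed and a final state is reachable. -/
def Accepts (M : UPDA Q Γ) (n : ℕ) : Prop :=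
  ∃ p γ, M.Reaches (M.start, 0, [M.Z0]) (p, n, γ) ∧ p ∈ M.final

/-- The order `≤` on modes `[qA]` of the paper. -/
def ModeLE (M : UPDA Q Γ) (x y : Q × Γ) : Prop :=
  ∃ (k h : ℕ) (α β : List Γ),
    M.Reaches (M.start, 0, [M.Z0]) (x.1, k, x.2 :: α) ∧
    M.Reaches (x.1, 0, [x.2]) (y.1, h, y.2 :: β) ∧
    ∀ (k' : ℕ) (β' : List Γ), k' < k →
      M.Reaches (M.start, 0, [M.Z0]) (y.1, k', y.2 :: β') →
      ∃ (k'' : ℕ) (p' : Q), k' + k'' < k ∧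
        M.Reaches (y.1, 0, [y.2]) (p', k'', ([] : List Γ))

/-- `c` is the (unique, by determinism) computation of `M` from the initial
configuration, followed for at least `t` steps. -/
def TraceUpTo (M : UPDA Q Γ) (c : ℕ → Q × ℕ × List Γ) (t : ℕ) : Prop :=
  c 0 = (M.start, 0, [M.Z0]) ∧ ∀ j < t, M.Step (c j) (c (j + 1))

end UPDA

/-- `ms` is the history at time `t` of the computation `c`, written
bottom-first: `ms[i]` is the mode (state, top stack symbol) of the last
configuration up to time `t` whose stack height is `i + 1`, and the length of
`ms` is the current stack height. -/
def HistoryAt {Q Γ : Type*} (c : ℕ → Q × ℕ × List Γ) (t : ℕ)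
    (ms : List (Q × Γ)) : Prop :=
  ms.length = (c t).2.2.length ∧
  ∀ i (hi : i < ms.length), ∃ j, j ≤ t ∧ (c j).2.2.length = i + 1 ∧
    (∀ j', j < j' → j' ≤ t → (c j').2.2.length ≠ i + 1) ∧
    (c j).1 = (ms.get ⟨i, hi⟩).1 ∧ (c j).2.2.head? = some (ms.get ⟨i, hi⟩).2

/-!
Run `M` from its initial configuration. Whether `a^(k + d)` is accepted depends only on the
configuration at the first moment `k` symbols have been read, and in fact only on its state and
on the live part of its stack: the cells above the lowest height the stack will ever drop to.
Record, top to bottom, the mode `[qA]` in which each live cell was written. If `y` is recorded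
above `x`, then from `x` the machine reaches `y` without uncovering the cell of `x`, and later
does uncover it. This relation has no 2-cycles, since a 2-cycle would be a loop that never
uncovers its starting cell and hence repeats forever. So the recorded list is determined by its
set, a nonempty subset of `Q × Γ`. Among the counter values `0, …, 2^{nm} - 1` two share this set,
so acceptance is periodic from the smaller one on, and a lasso-shaped DFA with `2^{nm}` states
decides it. If fewer than `2^{nm} - 1` symbols are ever read, the language is contained in
`{a^k | k < 2^{nm} - 1}` and the same DFA shape works.
-/

namespace UPDA

variable {Q Γ : Type*}

def embed (n : ℕ) (ρ : List Γ) (c : Q × ℕ × List Γ) : Q × ℕ × List Γ :=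
  (c.1, n + c.2.1, c.2.2 ++ ρ)

section Step

variable {M : UPDA Q Γ}

theorem step_unique (hdet : M.Deterministic) {c d₁ d₂ : Q × ℕ × List Γ}
    (h₁ : M.Step c d₁) (h₂ : M.Step c d₂) : d₁ = d₂ := by
  cases h₁ with
  | readA hm₁ | readE hm₁ | pop hm₁ | push hm₁ =>
    cases h₂ with
    | readA hm₂ | readE hm₂ | pop hm₂ | push hm₂ => cases hdet _ _ _ _ hm₁ hm₂ <;> rfl

theorem Step.counter_le {c d : Q × ℕ × List Γ} (h : M.Step c d) : d.2.1 ≤ c.2.1 + 1 := by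
  cases h <;> simp

theorem Step.length_le {c d : Q × ℕ × List Γ} (h : M.Step c d) :
    c.2.2.length ≤ d.2.2.length + 1 ∧ d.2.2.length ≤ c.2.2.length + 1 := by
  cases h <;> grind

theorem Step.suffix {c d : Q × ℕ × List Γ} {ρ : List Γ} (h : M.Step c d)
    (hc : ρ <:+ c.2.2) (hd : ρ.length < d.2.2.length) : ρ <:+ d.2.2 := by
  cases h with
  | pop =>
    rcases List.suffix_cons_iff.mp hc with rfl | hc
    · simp at hd
    · exact hc
  | push => exact hc.trans (List.suffix_cons _ _)
  | _ => exact hc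

theorem Step.z0_suffix (hnf : M.NormalForm) {c d : Q × ℕ × List Γ} (h : M.Step c d)
    (hc : [M.Z0] <:+ c.2.2) : [M.Z0] <:+ d.2.2 := by
  cases h with
  | @pop q _ A _ p hm =>
    rcases List.suffix_cons_iff.mp hc with h | hc
    · obtain ⟨rfl, rfl⟩ := List.cons_eq_cons.mp h
      exact absurd hm (hnf.2 q p)
    · exact hc
  | push => exact hc.trans (List.suffix_cons _ _)
  | _ => exact hc

theorem Step.embed {c d : Q × ℕ × List Γ} (h : M.Step c d) (n : ℕ) (ρ : List Γ) :
    M.Step (embed n ρ c) (embed n ρ d) := by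
  cases h with
  | readA hm => exact .readA hm
  | readE hm => exact .readE hm
  | pop hm => exact .pop hm
  | push hm => exact .push hm

theorem exists_step_of_embed {c d : Q × ℕ × List Γ} {n : ℕ} {ρ : List Γ}
    (h : M.Step (embed n ρ c) d) (hc : c.2.2 ≠ []) : ∃ d', M.Step c d' := by
  obtain ⟨q, k, _ | ⟨A, γ⟩⟩ := c
  · exact absurd rfl hc
  · cases h with
    | readA hm => exact ⟨_, .readA hm⟩
    | readE hm => exact ⟨_, .readE hm⟩
    | pop hm => exact ⟨_, .pop hm⟩
    | push hm => exact ⟨_, .push hm⟩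

end Step

variable (M : UPDA Q Γ)

/-- A configuration without a move is a fixed point, so that runs are total. -/
noncomputable def next (c : Q × ℕ × List Γ) : Q × ℕ × List Γ :=
  open Classical in if h : ∃ d, M.Step c d then h.choose else c

theorem step_next_or_eq (c : Q × ℕ × List Γ) : M.Step c (M.next c) ∨ M.next c = c := by
  unfold next
  split_ifs with h
  exacts [.inl h.choose_spec, .inr rfl]

theorem next_eq_of_step (hdet : M.Deterministic) {c d : Q × ℕ × List Γ} (h : M.Step c d) :
    M.next c = d := by
  unfold next
  rw [dif_pos ⟨d, h⟩]
  exact step_unique hdet (Exists.choose_spec _) h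

theorem next_eq_self {c : Q × ℕ × List Γ} (h : ¬∃ d, M.Step c d) : M.next c = c := by
  unfold next
  rw [dif_neg h]

theorem next_embed (hdet : M.Deterministic) {c : Q × ℕ × List Γ} (hc : c.2.2 ≠ [])
    (n : ℕ) (ρ : List Γ) : M.next (embed n ρ c) = embed n ρ (M.next c) := by
  by_cases h : ∃ d, M.Step c d
  · obtain ⟨d, hd⟩ := h
    rw [M.next_eq_of_step hdet hd, M.next_eq_of_step hdet (hd.embed n ρ)]
  · rw [M.next_eq_self h, M.next_eq_self fun ⟨_, hd⟩ => h (exists_step_of_embed hd hc)]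

theorem iterate_next_embed_of_ne_nil (hdet : M.Deterministic) {c : Q × ℕ × List Γ} {s : ℕ}
    (h : ∀ r < s, (M.next^[r] c).2.2 ≠ []) (n : ℕ) (ρ : List Γ) :
    M.next^[s] (embed n ρ c) = embed n ρ (M.next^[s] c) := by
  induction s with
  | zero => rfl
  | succ s ih =>
    rw [Function.iterate_succ_apply', Function.iterate_succ_apply',
      ih fun r hr => h r (by omega), M.next_embed hdet (h s (by omega))]

theorem iterate_next_embed (hdet : M.Deterministic) {c : Q × ℕ × List Γ} {s n : ℕ}
    {ρ : List Γ} (h : ∀ r < s, ρ.length < (M.next^[r] (embed n ρ c)).2.2.length) :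
    M.next^[s] (embed n ρ c) = embed n ρ (M.next^[s] c) := by
  induction s with
  | zero => rfl
  | succ s ih =>
    have e := ih fun r hr => h r (by omega)
    have hne : (M.next^[s] c).2.2 ≠ [] := by
      have := h s (by omega)
      rw [e, embed, List.length_append] at this
      exact List.ne_nil_of_length_pos (by omega)
    rw [Function.iterate_succ_apply', Function.iterate_succ_apply', e, M.next_embed hdet hne]

theorem reaches_iff_exists_iterate (hdet : M.Deterministic) {c d : Q × ℕ × List Γ} :
    M.Reaches c d ↔ ∃ s, M.next^[s] c = d := by
  constructor
  · intro h
    induction h with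
    | refl => exact ⟨0, rfl⟩
    | tail _ hstep ih =>
      obtain ⟨s, rfl⟩ := ih
      exact ⟨s + 1, by rw [Function.iterate_succ_apply', M.next_eq_of_step hdet hstep]⟩
  · rintro ⟨s, rfl⟩
    induction s with
    | zero => exact .refl
    | succ s ih =>
      rw [Function.iterate_succ_apply']
      rcases M.step_next_or_eq (M.next^[s] c) with h | h
      · exact ih.tail h
      · rwa [h]

theorem counter_next_le (c : Q × ℕ × List Γ) : (M.next c).2.1 ≤ c.2.1 + 1 := by
  rcases M.step_next_or_eq c with h | h
  · exact h.counter_le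
  · rw [h]; omega

theorem length_le_next (c : Q × ℕ × List Γ) :
    c.2.2.length ≤ (M.next c).2.2.length + 1 ∧ (M.next c).2.2.length ≤ c.2.2.length + 1 := by
  rcases M.step_next_or_eq c with h | h
  · exact h.length_le
  · rw [h]; omega

theorem suffix_next {c : Q × ℕ × List Γ} {ρ : List Γ} (hc : ρ <:+ c.2.2)
    (hn : ρ.length < (M.next c).2.2.length) : ρ <:+ (M.next c).2.2 := by
  rcases M.step_next_or_eq c with h | h
  · exact h.suffix hc hn
  · rwa [h]

noncomputable def run (s : ℕ) : Q × ℕ × List Γ := M.next^[s] (M.start, 0, [M.Z0])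

noncomputable def height (s : ℕ) : ℕ := (M.run s).2.2.length

theorem run_add (s r : ℕ) : M.run (s + r) = M.next^[r] (M.run s) := by
  rw [run, add_comm, Function.iterate_add_apply, run]

theorem run_succ (s : ℕ) : M.run (s + 1) = M.next (M.run s) :=
  Function.iterate_succ_apply' _ _ _

theorem accepts_iff (hdet : M.Deterministic) (v : ℕ) :
    M.Accepts v ↔ ∃ s, (M.run s).2.1 = v ∧ (M.run s).1 ∈ M.final := by
  simp only [Accepts, M.reaches_iff_exists_iterate hdet, run]
  constructor
  · rintro ⟨p, γ, ⟨s, hs⟩, hp⟩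
    exact ⟨s, by rw [hs], by rwa [hs]⟩
  · rintro ⟨s, hs, hp⟩
    exact ⟨_, _, ⟨s, by rw [← hs]⟩, hp⟩

theorem z0_suffix_run (hnf : M.NormalForm) (s : ℕ) : [M.Z0] <:+ (M.run s).2.2 := by
  induction s with
  | zero => exact List.suffix_refl _
  | succ s ih =>
    rw [run_succ]
    rcases M.step_next_or_eq (M.run s) with h | h
    · exact h.z0_suffix hnf ih
    · rwa [h]

theorem height_pos (hnf : M.NormalForm) (s : ℕ) : 0 < M.height s :=
  (M.z0_suffix_run hnf s).length_le

theorem height_le_succ (s : ℕ) :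
    M.height s ≤ M.height (s + 1) + 1 ∧ M.height (s + 1) ≤ M.height s + 1 := by
  rw [height, height, run_succ]
  exact M.length_le_next _

theorem suffix_run_of_height_lt {u v : ℕ} (huv : u ≤ v)
    (h : ∀ r, u < r → r ≤ v → M.height u < M.height r) : (M.run u).2.2 <:+ (M.run v).2.2 := by
  induction v, huv using Nat.le_induction with
  | base => exact List.suffix_refl _
  | succ v huv ih =>
    rw [run_succ]
    exact M.suffix_next (ih fun r hr hrv => h r hr (by omega)) (by
      rw [← run_succ]; exact h (v + 1) (by omega) le_rfl)

/-- For `1 ≤ h ≤ M.height t`, the time at which the cell at height `h` of the stack at time `t`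
was written. -/
noncomputable def entry (t h : ℕ) : ℕ := Nat.findGreatest (fun s => M.height s ≤ h) t

theorem entry_le (t h : ℕ) : M.entry t h ≤ t := Nat.findGreatest_le t

theorem lt_height_of_entry_lt {t h s : ℕ} (hs : M.entry t h < s) (hst : s ≤ t) :
    h < M.height s :=
  not_le.mp (Nat.findGreatest_is_greatest (P := fun s => M.height s ≤ h) hs hst)

theorem height_entry {t h : ℕ} (h1 : 1 ≤ h) (ht : h ≤ M.height t) :
    M.height (M.entry t h) = h := by
  have hle : M.height (M.entry t h) ≤ h :=
    Nat.findGreatest_spec (P := fun s => M.height s ≤ h) (Nat.zero_le t)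
      (show M.height 0 ≤ h from h1)
  rcases (M.entry_le t h).lt_or_eq with hlt | heq
  · have := M.lt_height_of_entry_lt (Nat.lt_add_one _) hlt
    have := (M.height_le_succ (M.entry t h)).2
    omega
  · rw [heq] at hle ⊢; omega

theorem entry_height (t : ℕ) : M.entry t (M.height t) = t :=
  Nat.findGreatest_eq le_rfl

theorem entry_lt_entry {t h h' : ℕ} (h1 : 1 ≤ h) (hh : h < h')
    (ht : h' ≤ M.height t) : M.entry t h < M.entry t h' := by
  by_contra hle
  rcases (not_lt.mp hle).lt_or_eq with hlt | heq
  · have := M.lt_height_of_entry_lt hlt (M.entry_le t h)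
    rw [M.height_entry h1 (by omega)] at this
    omega
  · have := congrArg M.height heq
    rw [M.height_entry (by omega) ht, M.height_entry h1 (by omega)] at this
    omega

noncomputable def liveHeight (t : ℕ) : ℕ := sInf (M.height '' Set.Ici t)

theorem liveHeight_le {t s : ℕ} (hs : t ≤ s) : M.liveHeight t ≤ M.height s :=
  Nat.sInf_le ⟨s, hs, rfl⟩

theorem exists_height_eq_liveHeight (t : ℕ) : ∃ s, t ≤ s ∧ M.height s = M.liveHeight t :=
  Nat.sInf_mem (s := M.height '' Set.Ici t) ⟨_, t, Set.mem_Ici.mpr le_rfl, rfl⟩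

theorem liveHeight_pos (hnf : M.NormalForm) (t : ℕ) : 0 < M.liveHeight t := by
  obtain ⟨s, -, hs⟩ := M.exists_height_eq_liveHeight t
  exact hs ▸ M.height_pos hnf s

theorem exists_first_return {t h : ℕ} (hh : M.liveHeight t ≤ h) (ht : h < M.height t) :
    ∃ s, t < s ∧ M.height s = h ∧ ∀ r, t ≤ r → r < s → h < M.height r := by
  classical
  have hex : ∃ s, t ≤ s ∧ M.height s ≤ h := by
    obtain ⟨s, hs, hs'⟩ := M.exists_height_eq_liveHeight t
    exact ⟨s, hs, hs' ▸ hh⟩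
  obtain ⟨hts, hle⟩ := Nat.find_spec hex
  have hbefore : ∀ r, t ≤ r → r < Nat.find hex → h < M.height r :=
    fun r htr hr => not_le.mp fun hrh => Nat.find_min hex hr ⟨htr, hrh⟩
  have hlt : t < Nat.find hex := hts.lt_of_ne fun e => by rw [← e] at hle; omega
  refine ⟨Nat.find hex, hlt, le_antisymm hle ?_, hbefore⟩
  have := hbefore (Nat.find hex - 1) (by omega) (by omega)
  have := (M.height_le_succ (Nat.find hex - 1)).1
  rw [Nat.sub_add_cancel (by omega)] at this
  omega

def ofMode (x : Q × Γ) : Q × ℕ × List Γ := (x.1, 0, [x.2])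

/-- `M.Z0` stands in for the top of an empty stack. -/
def mode (c : Q × ℕ × List Γ) : Q × Γ := (c.1, c.2.2.headD M.Z0)

theorem mode_embed {c : Q × ℕ × List Γ} (hc : c.2.2 ≠ []) (n : ℕ) (ρ : List Γ) :
    M.mode (embed n ρ c) = M.mode c := by
  obtain ⟨q, k, _ | ⟨A, γ⟩⟩ := c
  · exact absurd rfl hc
  · rfl

theorem eq_embed_ofMode {c : Q × ℕ × List Γ} (hc : c.2.2 ≠ []) :
    c = embed c.2.1 c.2.2.tail (ofMode (M.mode c)) := by
  obtain ⟨q, k, _ | ⟨A, γ⟩⟩ := c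
  · exact absurd rfl hc
  · simp [embed, ofMode, mode]

def ReachesAbove (x y : Q × Γ) : Prop :=
  ∃ w > 0, M.mode (M.next^[w] (ofMode x)) = y ∧
    ∀ r, 0 < r → r ≤ w → 2 ≤ (M.next^[r] (ofMode x)).2.2.length

def Returns (x : Q × Γ) : Prop :=
  ∃ w > 0, (M.next^[w] (ofMode x)).2.2.length = 1

def LiesAbove (y x : Q × Γ) : Prop := M.ReachesAbove x y ∧ M.Returns x

theorem iterate_ofMode_ne_nil {x : Q × Γ} {w : ℕ}
    (h : ∀ r, 0 < r → r ≤ w → 2 ≤ (M.next^[r] (ofMode x)).2.2.length) {r : ℕ} (hr : r ≤ w) :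
    (M.next^[r] (ofMode x)).2.2 ≠ [] := by
  rcases Nat.eq_zero_or_pos r with rfl | hr₀
  · exact List.cons_ne_nil _ _
  · exact List.ne_nil_of_length_pos (by have := h r hr₀ hr; omega)

variable {M} in
theorem ReachesAbove.trans (hdet : M.Deterministic) {x y z : Q × Γ}
    (hxy : M.ReachesAbove x y) (hyz : M.ReachesAbove y z) : M.ReachesAbove x z := by
  obtain ⟨w₁, hw₁, hm₁, hh₁⟩ := hxy
  obtain ⟨w₂, hw₂, hm₂, hh₂⟩ := hyz
  have hc := M.eq_embed_ofMode (M.iterate_ofMode_ne_nil hh₁ le_rfl)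
  rw [hm₁] at hc
  have hy : ∀ r ≤ w₂, M.next^[r + w₁] (ofMode x) = embed _ _ (M.next^[r] (ofMode y)) :=
    fun r hr => by
      rw [Function.iterate_add_apply, hc, M.iterate_next_embed_of_ne_nil hdet
        fun r' hr' => M.iterate_ofMode_ne_nil hh₂ (by omega)]
  refine ⟨w₂ + w₁, by omega, ?_, fun r hr hrw => ?_⟩
  · rw [hy w₂ le_rfl, M.mode_embed (M.iterate_ofMode_ne_nil hh₂ le_rfl), hm₂]
  · rcases le_or_gt r w₁ with h | h
    · exact hh₁ r hr h
    · obtain ⟨r, rfl⟩ : ∃ r', r = r' + w₁ := ⟨r - w₁, by omega⟩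
      rw [hy r (by omega), embed, List.length_append]
      have := hh₂ r (by omega) (by omega)
      omega

variable {M} in
/-- Pumping: a loop from `x` back to `x` that stays above the starting cell repeats forever. -/
theorem ReachesAbove.not_returns (hdet : M.Deterministic) {x : Q × Γ}
    (hx : M.ReachesAbove x x) : ¬M.Returns x := by
  obtain ⟨w, hw, hm, hh⟩ := hx
  have hc := M.eq_embed_ofMode (M.iterate_ofMode_ne_nil hh le_rfl)
  rw [hm] at hc
  have hτ := hh w hw le_rfl
  rw [hc, embed, List.length_append] at hτ
  suffices ∀ s, 0 < s → 2 ≤ (M.next^[s] (ofMode x)).2.2.length by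
    rintro ⟨s, hs, h1⟩
    have := this s hs
    omega
  intro s
  induction s using Nat.strong_induction_on with
  | _ s ih =>
  intro hs
  rcases le_or_gt s w with hsw | hws
  · exact hh s hs hsw
  obtain ⟨r, rfl⟩ : ∃ r, s = r + w := ⟨s - w, by omega⟩
  have hne : ∀ r' ≤ r, (M.next^[r'] (ofMode x)).2.2 ≠ [] :=
    fun r' => M.iterate_ofMode_ne_nil fun r'' h₀ hr'' => ih r'' (by omega) h₀
  rw [Function.iterate_add_apply, hc,
    M.iterate_next_embed_of_ne_nil hdet fun r' hr' => hne r' hr'.le, embed, List.length_append]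
  have := List.length_pos_of_ne_nil (hne r le_rfl)
  change 2 ≤ 1 + _ at hτ
  omega

variable {M} in
theorem LiesAbove.asymm (hdet : M.Deterministic) {x y : Q × Γ} (hyx : M.LiesAbove y x)
    (hxy : M.LiesAbove x y) : False :=
  (hyx.1.trans hdet hxy.1).not_returns hdet hyx.2

theorem run_add_eq_embed (hdet : M.Deterministic) (hnf : M.NormalForm) {u w : ℕ}
    (hw : ∀ r, 0 < r → r < w → M.height u ≤ M.height (u + r)) :
    M.run (u + w) =
      embed (M.run u).2.1 (M.run u).2.2.tail (M.next^[w] (ofMode (M.mode (M.run u)))) := by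
  have hne : (M.run u).2.2 ≠ [] := List.ne_nil_of_length_pos (M.height_pos hnf u)
  rw [run_add]
  conv_lhs => rw [M.eq_embed_ofMode hne]
  refine M.iterate_next_embed hdet fun r hr => ?_
  rw [← M.eq_embed_ofMode hne, ← run_add, List.length_tail]
  have := M.height_pos hnf u
  rcases Nat.eq_zero_or_pos r with rfl | hr₀
  · exact Nat.sub_lt this one_pos
  · have := hw r hr₀ hr
    unfold height at *
    omega

theorem reachesAbove_mode_entry (hdet : M.Deterministic) (hnf : M.NormalForm) {t h h' : ℕ}
    (h1 : 1 ≤ h) (hh : h < h') (ht : h' ≤ M.height t) :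
    M.ReachesAbove (M.mode (M.run (M.entry t h))) (M.mode (M.run (M.entry t h'))) := by
  have hu := M.height_entry h1 (hh.le.trans ht)
  obtain ⟨w, hw⟩ : ∃ w, M.entry t h' = M.entry t h + w :=
    Nat.exists_eq_add_of_le (M.entry_lt_entry h1 hh ht).le
  have habove : ∀ r, 0 < r → r ≤ w → h < M.height (M.entry t h + r) := fun r hr hrw =>
    M.lt_height_of_entry_lt (t := t) (by omega) (by have := M.entry_le t h'; omega)
  have hrun : ∀ r ≤ w, M.run (M.entry t h + r) =
      embed _ _ (M.next^[r] (ofMode (M.mode (M.run (M.entry t h))))) :=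
    fun r hrw => M.run_add_eq_embed hdet hnf fun r' hr' hr'r => by
      have := habove r' hr' (by omega)
      omega
  have hlen : ∀ r, 0 < r → r ≤ w →
      2 ≤ (M.next^[r] (ofMode (M.mode (M.run (M.entry t h))))).2.2.length := fun r hr hrw => by
    have := habove r hr hrw
    rw [height, hrun r hrw, embed, List.length_append, List.length_tail] at this
    unfold height at hu
    omega
  have hw₀ : 0 < w := by have := M.entry_lt_entry h1 hh ht; omega
  refine ⟨w, hw₀, ?_, hlen⟩
  rw [hw, hrun w le_rfl, M.mode_embed (M.iterate_ofMode_ne_nil hlen le_rfl)]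

theorem returns_mode_entry (hdet : M.Deterministic) (hnf : M.NormalForm) {t h : ℕ}
    (hh : M.liveHeight t ≤ h) (ht : h < M.height t) :
    M.Returns (M.mode (M.run (M.entry t h))) := by
  have hu := M.height_entry ((M.liveHeight_pos hnf t).trans_le hh) ht.le
  have hut := M.entry_le t h
  obtain ⟨s, hts, hs, hbefore⟩ := M.exists_first_return hh ht
  obtain ⟨w, rfl⟩ : ∃ w, s = M.entry t h + w := ⟨s - M.entry t h, by omega⟩
  have habove : ∀ r, 0 < r → r < w → h < M.height (M.entry t h + r) := fun r hr hrw => by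
    rcases le_or_gt (M.entry t h + r) t with hrt | hrt
    · exact M.lt_height_of_entry_lt (by omega) hrt
    · exact hbefore _ hrt.le (by omega)
  have hrun := M.run_add_eq_embed hdet hnf (u := M.entry t h) (w := w) fun r hr hrw => by
    have := habove r hr hrw
    omega
  refine ⟨w, by omega, ?_⟩
  rw [height, hrun, embed, List.length_append, List.length_tail] at hs
  unfold height at hu
  have := M.liveHeight_pos hnf t
  omega

/-- Top to bottom, the modes in which the cells of the stack at time `t` that are still to be
read were written. -/
noncomputable def liveModes (t : ℕ) : List (Q × Γ) :=
  (List.range (M.height t + 1 - M.liveHeight t)).map fun j =>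
    M.mode (M.run (M.entry t (M.height t - j)))

theorem length_liveModes (t : ℕ) :
    (M.liveModes t).length = M.height t + 1 - M.liveHeight t := by
  simp [liveModes]

theorem head?_liveModes (t : ℕ) : (M.liveModes t).head? = some (M.mode (M.run t)) := by
  obtain ⟨L, hL⟩ : ∃ L, M.height t + 1 - M.liveHeight t = L + 1 :=
    ⟨M.height t - M.liveHeight t, by have := M.liveHeight_le (le_refl t); omega⟩
  rw [liveModes, hL, List.range_succ_eq_map]
  simp [entry_height]

theorem map_snd_liveModes (hnf : M.NormalForm) (t : ℕ) :
    (M.liveModes t).map Prod.snd = (M.run t).2.2.take (M.liveModes t).length := by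
  have hlive := M.liveHeight_pos hnf t
  have hle := M.liveHeight_le (le_refl t)
  refine List.ext_getElem (by simp [length_liveModes, height]; omega) fun j hj _ => ?_
  replace hj : j < M.height t + 1 - M.liveHeight t := by simpa [length_liveModes] using hj
  have hlen : M.height (M.entry t (M.height t - j)) = M.height t - j :=
    M.height_entry (by omega) (by omega)
  have hsuf : (M.run (M.entry t (M.height t - j))).2.2 <:+ (M.run t).2.2 :=
    M.suffix_run_of_height_lt (M.entry_le t _) fun r hr hrt => by
      rw [hlen]; exact M.lt_height_of_entry_lt hr hrt
  have hlen' : (M.run (M.entry t (M.height t - j))).2.2.length = M.height t - j := hlen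
  have ht : (M.run t).2.2.length = M.height t := rfl
  have hpos : 0 < (M.run (M.entry t (M.height t - j))).2.2.length := by omega
  have hidx : (M.run t).2.2.length - (M.run (M.entry t (M.height t - j))).2.2.length + 0 = j := by
    omega
  have := hsuf.getElem hpos
  simp only [liveModes, List.getElem_map, List.getElem_range, List.getElem_take, mode,
    List.headD_eq_getD, List.getD_eq_getElem?_getD, List.getElem?_eq_getElem hpos,
    Option.getD_some, this]
  simp only [hidx]

theorem pairwise_liveModes (hdet : M.Deterministic) (hnf : M.NormalForm) (t : ℕ) :
    (M.liveModes t).Pairwise M.LiesAbove := by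
  have hlive := M.liveHeight_pos hnf t
  rw [liveModes, List.pairwise_map]
  refine List.pairwise_lt_range.imp_of_mem fun {i j} _ hj hij => ?_
  rw [List.mem_range] at hj
  exact ⟨M.reachesAbove_mode_entry hdet hnf (by omega) (by omega) (by omega),
    M.returns_mode_entry hdet hnf (by omega) (by omega)⟩

def future (c : Q × ℕ × List Γ) : Set ℕ :=
  {d | ∃ r, (M.next^[r] c).2.1 = c.2.1 + d ∧ (M.next^[r] c).1 ∈ M.final}

theorem future_embed (hdet : M.Deterministic) {c : Q × ℕ × List Γ} {n : ℕ} {ρ : List Γ}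
    (h : ∀ r, ρ.length < (M.next^[r] (embed n ρ c)).2.2.length) :
    M.future (embed n ρ c) = M.future c := by
  have e : ∀ r, M.next^[r] (embed n ρ c) = embed n ρ (M.next^[r] c) :=
    fun r => M.iterate_next_embed hdet fun r' _ => h r'
  ext d
  simp only [future, Set.mem_ofPred_eq, e]
  simp only [embed]
  constructor <;> rintro ⟨r, h₁, h₂⟩ <;> exact ⟨r, by omega, h₂⟩

theorem future_run (hdet : M.Deterministic) (hnf : M.NormalForm) (t : ℕ) :
    M.future (M.run t) =
      M.future ((M.run t).1, 0, (M.run t).2.2.take (M.liveModes t).length) := by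
  have hrun : M.run t = embed (M.run t).2.1 ((M.run t).2.2.drop (M.liveModes t).length)
      ((M.run t).1, 0, (M.run t).2.2.take (M.liveModes t).length) := by
    simp [embed]
  conv_lhs => rw [hrun]
  refine M.future_embed hdet fun r => ?_
  rw [← hrun, ← run_add, List.length_drop, length_liveModes]
  have := M.liveHeight_le (Nat.le_add_right t r)
  have := M.liveHeight_pos hnf t
  unfold height at *
  omega

theorem future_run_eq_of_liveModes_eq (hdet : M.Deterministic) (hnf : M.NormalForm)
    {t₁ t₂ : ℕ} (h : M.liveModes t₁ = M.liveModes t₂) :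
    M.future (M.run t₁) = M.future (M.run t₂) := by
  have hmode := congrArg List.head? h
  rw [head?_liveModes, head?_liveModes, Option.some_inj] at hmode
  have hstate : (M.run t₁).1 = (M.run t₂).1 := (Prod.ext_iff.mp hmode).1
  rw [M.future_run hdet hnf, M.future_run hdet hnf, ← M.map_snd_liveModes hnf,
    ← M.map_snd_liveModes hnf, h, hstate]

theorem liveModes_eq_of_toFinset_eq [DecidableEq Q] [DecidableEq Γ] (hdet : M.Deterministic)
    (hnf : M.NormalForm) {t₁ t₂ : ℕ} (h : (M.liveModes t₁).toFinset = (M.liveModes t₂).toFinset) :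
    M.liveModes t₁ = M.liveModes t₂ :=
  have : Std.Asymm M.LiesAbove := ⟨fun _ _ hyx hxy => LiesAbove.asymm hdet hyx hxy⟩
  (M.pairwise_liveModes hdet hnf t₁).eq_of_mem_iff (M.pairwise_liveModes hdet hnf t₂)
    fun x => by rw [← List.mem_toFinset, h, List.mem_toFinset]

/-- Meaningful only if `k` symbols are read at some time; otherwise `sInf ∅ = 0`. -/
noncomputable def arrival (k : ℕ) : ℕ := sInf {s | k ≤ (M.run s).2.1}

theorem counter_lt_of_lt_arrival {k s : ℕ} (hs : s < M.arrival k) : (M.run s).2.1 < k :=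
  not_le.mp (notMem_of_lt_csInf' (s := {s | k ≤ (M.run s).2.1}) hs)

theorem counter_run_arrival {k : ℕ} (hk : ∃ s, k ≤ (M.run s).2.1) :
    (M.run (M.arrival k)).2.1 = k := by
  have hle : k ≤ (M.run (M.arrival k)).2.1 := Nat.sInf_mem hk
  rcases Nat.eq_zero_or_pos (M.arrival k) with h₀ | h₀
  · rw [h₀] at hle ⊢
    exact (Nat.le_zero.mp hle).symm
  · have := M.counter_lt_of_lt_arrival (Nat.sub_lt h₀ one_pos)
    have := M.counter_next_le (M.run (M.arrival k - 1))
    rw [← run_succ, Nat.sub_add_cancel h₀] at this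
    omega

theorem accepts_add_iff (hdet : M.Deterministic) {k : ℕ} (hk : ∃ s, k ≤ (M.run s).2.1) (d : ℕ) :
    M.Accepts (k + d) ↔ d ∈ M.future (M.run (M.arrival k)) := by
  rw [M.accepts_iff hdet, future, Set.mem_ofPred_eq, M.counter_run_arrival hk]
  constructor
  · rintro ⟨s, hs, hf⟩
    obtain ⟨r, rfl⟩ := Nat.exists_eq_add_of_le (show M.arrival k ≤ s from not_lt.mp fun h => by
      have := M.counter_lt_of_lt_arrival h
      omega)
    exact ⟨r, by rwa [← run_add], by rwa [← run_add]⟩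
  · rintro ⟨r, hr, hf⟩
    exact ⟨_, by rwa [run_add], by rwa [run_add]⟩

theorem accepts_add_iff_of_toFinset_eq [DecidableEq Q] [DecidableEq Γ]
    (hdet : M.Deterministic) (hnf : M.NormalForm) {a b : ℕ} (ha : ∃ s, a ≤ (M.run s).2.1)
    (hb : ∃ s, b ≤ (M.run s).2.1)
    (h : (M.liveModes (M.arrival a)).toFinset = (M.liveModes (M.arrival b)).toFinset) (d : ℕ) :
    M.Accepts (a + d) ↔ M.Accepts (b + d) := by
  rw [M.accepts_add_iff hdet ha, M.accepts_add_iff hdet hb,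
    M.future_run_eq_of_liveModes_eq hdet hnf (M.liveModes_eq_of_toFinset_eq hdet hnf h)]

theorem liveModes_ne_nil (t : ℕ) : M.liveModes t ≠ [] := by
  apply List.ne_nil_of_length_pos
  rw [length_liveModes]
  have := M.liveHeight_le (le_refl t)
  omega

theorem exists_toFinset_liveModes_eq [Fintype Q] [Fintype Γ] [DecidableEq Q] [DecidableEq Γ]
    (f : ℕ → ℕ) : ∃ a b, a < b ∧ b < 2 ^ (Fintype.card Q * Fintype.card Γ) ∧
      (M.liveModes (f a)).toFinset = (M.liveModes (f b)).toFinset := by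
  have hcard : ((Finset.univ : Finset (Finset (Q × Γ))).erase ∅).card <
      (Finset.range (2 ^ (Fintype.card Q * Fintype.card Γ))).card := by
    rw [Finset.card_erase_of_mem (Finset.mem_univ _), Finset.card_univ, Fintype.card_finset,
      Fintype.card_prod, Finset.card_range]
    exact Nat.sub_lt (by positivity) one_pos
  obtain ⟨a, ha, b, hb, hab, heq⟩ := Finset.exists_ne_map_eq_of_card_lt_of_maps_to hcard
    (f := fun k => (M.liveModes (f k)).toFinset) fun k _ => by
      simpa using M.liveModes_ne_nil (f k)
  rw [Finset.mem_range] at ha hb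
  rcases hab.lt_or_gt with h | h
  exacts [⟨a, b, h, hb, heq⟩, ⟨b, a, h, ha, heq.symm⟩]

theorem exists_periodic [Fintype Q] [Fintype Γ] (hdet : M.Deterministic) (hnf : M.NormalForm) :
    ∃ k₁ k₂, k₁ < k₂ ∧ k₂ ≤ 2 ^ (Fintype.card Q * Fintype.card Γ) ∧
      ∀ d, M.Accepts (k₁ + d) ↔ M.Accepts (k₂ + d) := by
  classical
  set K := 2 ^ (Fintype.card Q * Fintype.card Γ)
  by_cases hreach : ∃ s, K - 1 ≤ (M.run s).2.1
  · obtain ⟨a, b, hab, hbK, heq⟩ := M.exists_toFinset_liveModes_eq M.arrival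
    have hex : ∀ k < K, ∃ s, k ≤ (M.run s).2.1 := fun k hk => hreach.imp fun s hs => by omega
    exact ⟨a, b, hab, hbK.le,
      M.accepts_add_iff_of_toFinset_eq hdet hnf (hex a (by omega)) (hex b hbK) heq⟩
  · simp only [not_exists, not_le] at hreach
    have hnot : ∀ v, K - 1 ≤ v → ¬M.Accepts v := fun v hv hacc => by
      obtain ⟨s, hs, -⟩ := (M.accepts_iff hdet v).mp hacc
      exact (hreach s).not_ge (hs ▸ hv)
    have hK : 0 < K := by positivity
    exact ⟨K - 1, K, by omega, le_rfl,
      fun d => iff_of_false (hnot _ (by omega)) (hnot _ (by omega))⟩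

end UPDA

theorem DFA.exists_unary_of_periodic {P : ℕ → Prop} {K k₁ k₂ : ℕ} (hk : k₁ < k₂) (hK : k₂ ≤ K)
    (hP : ∀ d, P (k₁ + d) ↔ P (k₂ + d)) :
    ∃ D : DFA (Fin 1) (Fin K), ∀ k, List.replicate k 0 ∈ D.accepts ↔ P k := by
  classical
  let D : DFA (Fin 1) (Fin K) :=
    ⟨fun s _ => if h : s.val + 1 < k₂ then ⟨s + 1, by omega⟩ else ⟨k₁, by omega⟩,
      ⟨0, by omega⟩, {s | P s}⟩
  have key : ∀ k, (D.eval (List.replicate k 0)).val < k₂ ∧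
      ∀ d, P ((D.eval (List.replicate k 0)).val + d) ↔ P (k + d) := by
    intro k
    induction k with
    | zero => exact ⟨by simp [D]; omega, fun d => by simp [D]⟩
    | succ k ih =>
      rw [List.replicate_succ', DFA.eval_append_singleton]
      set s := D.eval (List.replicate k 0)
      by_cases hs : s.val + 1 < k₂
      · refine ⟨by simp [D, hs], fun d => ?_⟩
        simpa [D, hs, add_assoc, add_comm 1 d] using ih.2 (1 + d)
      · refine ⟨by simp [D, hs]; omega, fun d => ?_⟩
        have := ih.2 (1 + d)
        rw [show s.val + (1 + d) = k₂ + d by omega, ← hP d,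
          show k + (1 + d) = k + 1 + d by omega] at this
        simpa [D, hs] using this
  exact ⟨D, fun k => by simpa [DFA.mem_accepts, D] using (key k).2 0⟩

/-- every unary language accepted by a deterministic pushdown
automaton in normal form with `n` states and `m` stack symbols is accepted by a
one-way deterministic finite automaton with at most `2^{nm}` states
(`a^k` is represented as `List.replicate k 0` over the alphabet `Fin 1`). -/
theorem stmt_14 {Q Γ : Type*} [Fintype Q] [Fintype Γ] (M : UPDA Q Γ)
    (hdet : M.Deterministic) (hnf : M.NormalForm) (n m : ℕ)
    (hn : Fintype.card Q = n) (hm : Fintype.card Γ = m) :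
    ∃ D : DFA (Fin 1) (Fin (2 ^ (n * m))),
      ∀ k : ℕ, (List.replicate k 0 ∈ D.accepts ↔ M.Accepts k) := by
  subst hn hm
  obtain ⟨k₁, k₂, hk, hK, hper⟩ := M.exists_periodic hdet hnf
  exact DFA.exists_unary_of_periodic hk hK hper
end

section
/- Every unary deterministic pushdown automaton in normal form with n states and m stack symbols accepting by final states is equivalent to a context-free grammar with at most 2nm variables in which every production's right-hand side has length at most 2. -/
/-- Context-free derivation relation generated by a set `P` of productions
(variables `V`, terminals `T`). -/
def CFDerives {V T : Type*} (P : V → List (V ⊕ T) → Prop) :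
    List (V ⊕ T) → List (V ⊕ T) → Prop :=
  Relation.ReflTransGen (fun u v => ∃ x y N rhs, P N rhs ∧
    u = x ++ Sum.inl N :: y ∧ v = x ++ rhs ++ y)

/-!
The variable `[qA]_0` generates the inputs on which `M`, started in `q` with `A` alone on the
stack, pops `A`, and `[qA]_1` those on which it reaches a final state before popping `A` (an empty
stack halts `M`). A push of `B` in state `p` splits a computation at the moment `B` is popped
again; by determinism the state `s` reached there depends only on `p` and `B`, so the production
`[qA]_b → [pB]_0 [sA]_b` needs no third state index, which keeps the count at `2nm`. Soundness
holds because every production respects the sets of lengths the variables stand for, completeness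
is a strong induction on the length of the computation.
-/namespace UPDA

variable {Q Γ : Type*} {M : UPDA Q Γ}

inductive ReachesIn (M : UPDA Q Γ) : ℕ → Q × ℕ × List Γ → Q × ℕ × List Γ → Prop
  | refl (c) : ReachesIn M 0 c c
  | head {c c' c'' t} : M.Step c c' → ReachesIn M t c' c'' → ReachesIn M (t + 1) c c''

lemma ReachesIn.reaches {t c c'} (h : M.ReachesIn t c c') : M.Reaches c c' := by
  induction h with
  | refl => exact .refl
  | head hs _ ih => exact .head hs ih

lemma Reaches.exists_reachesIn {c c'} (h : M.Reaches c c') : ∃ t, M.ReachesIn t c c' := by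
  induction h using Relation.ReflTransGen.head_induction_on with
  | refl => exact ⟨0, .refl _⟩
  | head hs _ ih =>
    obtain ⟨t, ht⟩ := ih
    exact ⟨t + 1, .head hs ht⟩

lemma Step.exists_translate {c c'} (h : M.Step c c') :
    ∃ d, c'.2.1 = c.2.1 + d ∧ ∀ n₀, M.Step (c.1, n₀, c.2.2) (c'.1, n₀ + d, c'.2.2) := by
  cases h with
  | readA hm => exact ⟨1, rfl, fun _ => .readA hm⟩
  | readE hm => exact ⟨0, rfl, fun _ => .readE hm⟩
  | pop hm => exact ⟨0, rfl, fun _ => .pop hm⟩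
  | push hm => exact ⟨0, rfl, fun _ => .push hm⟩

lemma ReachesIn.exists_translate {t c c'} (h : M.ReachesIn t c c') :
    ∃ d, c'.2.1 = c.2.1 + d ∧ ∀ n₀, M.ReachesIn t (c.1, n₀, c.2.2) (c'.1, n₀ + d, c'.2.2) := by
  induction h with
  | refl => exact ⟨0, rfl, fun _ => .refl _⟩
  | head hs _ ih =>
    obtain ⟨d₁, hd₁, hs⟩ := hs.exists_translate
    obtain ⟨d₂, hd₂, ih⟩ := ih
    refine ⟨d₁ + d₂, by omega, fun n₀ => .head (hs n₀) ?_⟩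
    simpa only [add_assoc] using ih (n₀ + d₁)

lemma Reaches.translate {q p σ σ' k} (h : M.Reaches (q, 0, σ) (p, k, σ')) (d : ℕ) :
    M.Reaches (q, d, σ) (p, d + k, σ') := by
  obtain ⟨t, ht⟩ := h.exists_reachesIn
  obtain ⟨e, rfl, ht⟩ := ht.exists_translate
  simpa using (ht d).reaches

lemma Step.append {c c'} (h : M.Step c c') (ρ : List Γ) :
    M.Step (c.1, c.2.1, c.2.2 ++ ρ) (c'.1, c'.2.1, c'.2.2 ++ ρ) := by
  cases h with
  | readA hm => exact .readA hm
  | readE hm => exact .readE hm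
  | pop hm => exact .pop hm
  | push hm => exact .push hm

lemma Reaches.append {q n σ p n' σ'} (h : M.Reaches (q, n, σ) (p, n', σ')) (ρ : List Γ) :
    M.Reaches (q, n, σ ++ ρ) (p, n', σ' ++ ρ) :=
  Relation.ReflTransGen.lift (fun c : Q × ℕ × List Γ => (c.1, c.2.1, c.2.2 ++ ρ))
    (fun _ _ hs => Step.append hs ρ) _ _ h

lemma Step.of_append {q n σ ρ c'} (h : M.Step (q, n, σ ++ ρ) c') (hσ : σ ≠ []) :
    ∃ p n' τ, c' = (p, n', τ ++ ρ) ∧ M.Step (q, n, σ) (p, n', τ) := by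
  obtain ⟨A, σ, rfl⟩ := List.exists_cons_of_ne_nil hσ
  rw [List.cons_append] at h
  cases h with
  | readA hm => exact ⟨_, _, A :: σ, rfl, .readA hm⟩
  | readE hm => exact ⟨_, _, A :: σ, rfl, .readE hm⟩
  | pop hm => exact ⟨_, _, σ, rfl, .pop hm⟩
  | @push _ _ _ _ _ B hm => exact ⟨_, _, B :: A :: σ, rfl, .push hm⟩

lemma ReachesIn.split_append {t q n σ ρ r h τ} (hr : M.ReachesIn t (q, n, σ ++ ρ) (r, h, τ)) :
    (∃ τ', τ = τ' ++ ρ ∧ M.ReachesIn t (q, n, σ) (r, h, τ')) ∨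
      ∃ t₁ t₂ s k, t₁ + t₂ = t ∧ M.ReachesIn t₁ (q, n, σ) (s, k, []) ∧
        M.ReachesIn t₂ (s, k, ρ) (r, h, τ) := by
  induction t generalizing q n σ with
  | zero =>
    cases hr
    exact .inl ⟨σ, rfl, .refl _⟩
  | succ t ih =>
    obtain _ | ⟨hs, hr⟩ := hr
    rcases eq_or_ne σ [] with rfl | hσ
    · exact .inr ⟨0, t + 1, q, n, by omega, .refl _, .head hs hr⟩
    obtain ⟨p, n', τ₁, rfl, hs'⟩ := hs.of_append hσ
    rcases ih hr with ⟨τ', rfl, hr'⟩ | ⟨t₁, t₂, s, k, rfl, h₁, h₂⟩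
    · exact .inl ⟨τ', rfl, .head hs' hr'⟩
    · exact .inr ⟨t₁ + 1, t₂, s, k, by omega, .head hs' h₁, h₂⟩

lemma Step.right_unique (hdet : M.Deterministic) : Relator.RightUnique M.Step := by
  intro c c₁ c₂ h₁ h₂
  rcases h₁ with ⟨h₁⟩ | ⟨h₁⟩ | ⟨h₁⟩ | ⟨h₁⟩ <;> rcases h₂ with ⟨h₂⟩ | ⟨h₂⟩ | ⟨h₂⟩ | ⟨h₂⟩ <;>
    cases hdet _ _ _ _ h₁ h₂ <;> rfl

lemma Reaches.eq_of_nil (hdet : M.Deterministic) {c r r' k k'}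
    (h₁ : M.Reaches c (r, k, [])) (h₂ : M.Reaches c (r', k', [])) : r = r' ∧ k = k' := by
  have halt : ∀ {q k c'}, M.Reaches (q, k, []) c' → c' = (q, k, []) := fun h => by
    rcases h.cases_head with rfl | ⟨_, hs, _⟩
    · rfl
    · cases hs
  rcases Relation.ReflTransGen.total_of_right_unique (Step.right_unique hdet) h₁ h₂ with h | h
  · simpa [eq_comm] using halt h
  · simpa using halt h

lemma Step.exists_eq_append_bottom (hnf : M.NormalForm) {c c' σ} (h : M.Step c c')
    (hc : c.2.2 = σ ++ [M.Z0]) : ∃ τ, c'.2.2 = τ ++ [M.Z0] := by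
  obtain ⟨q, n, _⟩ := c
  subst hc
  rcases eq_or_ne σ [] with rfl | hσ
  · cases h with
    | readA hm => exact ⟨[], rfl⟩
    | readE hm => exact ⟨[], rfl⟩
    | pop hm => exact absurd hm (hnf.2 _ _)
    | @push _ _ _ _ _ B hm => exact ⟨[B], rfl⟩
  · obtain ⟨p, n', τ, rfl, -⟩ := h.of_append hσ
    exact ⟨τ, rfl⟩

lemma Reaches.stack_ne_nil (hnf : M.NormalForm) {q n σ p n' τ}
    (h : M.Reaches (q, n, σ ++ [M.Z0]) (p, n', τ)) : τ ≠ [] := by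
  suffices ∀ {c'}, M.Reaches (q, n, σ ++ [M.Z0]) c' → ∃ τ', c'.2.2 = τ' ++ [M.Z0] by
    obtain ⟨τ', rfl⟩ := this h
    simp
  intro c' h
  induction h with
  | refl => exact ⟨σ, rfl⟩
  | tail _ hs ih =>
    obtain ⟨τ', hτ'⟩ := ih
    exact hs.exists_eq_append_bottom hnf hτ'

end UPDA

section CFDerives

variable {V W T : Type*} {P : V → List (V ⊕ T) → Prop}

lemma CFDerives.head {N : V} {rhs w : List (V ⊕ T)} (h : P N rhs) (hw : CFDerives P rhs w) :
    CFDerives P [.inl N] w :=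
  Relation.ReflTransGen.head ⟨[], [], N, rhs, h, rfl, by simp⟩ hw

lemma CFDerives.single {N : V} {rhs : List (V ⊕ T)} (h : P N rhs) : CFDerives P [.inl N] rhs :=
  .head h .refl

lemma CFDerives.append {u u' v v' : List (V ⊕ T)} (hu : CFDerives P u u')
    (hv : CFDerives P v v') : CFDerives P (u ++ v) (u' ++ v') := by
  have left : CFDerives P (u ++ v) (u' ++ v) :=
    Relation.ReflTransGen.lift (· ++ v) (fun _ _ ⟨x, y, N, rhs, hP, h₁, h₂⟩ =>
      ⟨x, y ++ v, N, rhs, hP, by simp [h₁], by simp [h₂]⟩) _ _ hu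
  have right : CFDerives P (u' ++ v) (u' ++ v') :=
    Relation.ReflTransGen.lift (u' ++ ·) (fun _ _ ⟨x, y, N, rhs, hP, h₁, h₂⟩ =>
      ⟨u' ++ x, y, N, rhs, hP, by simp [h₁], by simp [h₂]⟩) _ _ hv
  exact left.trans right

lemma CFDerives.map {P' : W → List (W ⊕ T) → Prop} (f : V → W)
    (hf : ∀ N rhs, P N rhs → P' (f N) (rhs.map (Sum.map f id))) {u v : List (V ⊕ T)}
    (h : CFDerives P u v) : CFDerives P' (u.map (Sum.map f id)) (v.map (Sum.map f id)) :=
  Relation.ReflTransGen.lift _ (fun _ _ ⟨x, y, N, rhs, hP, h₁, h₂⟩ =>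
    ⟨x.map (Sum.map f id), y.map (Sum.map f id), f N, rhs.map (Sum.map f id), hf _ _ hP,
      by simp [h₁], by simp [h₂]⟩) _ _ h

lemma CFDerives.map_equiv_iff (e : V ≃ W) {u v : List (V ⊕ T)} :
    CFDerives (fun N rhs => P (e.symm N) (rhs.map (Sum.map e.symm id)))
      (u.map (Sum.map e id)) (v.map (Sum.map e id)) ↔ CFDerives P u v := by
  constructor
  · intro h
    simpa [List.map_map, Sum.map_comp_map] using h.map e.symm fun _ _ hP => hP
  · exact CFDerives.map e fun _ _ hP => by simpa [List.map_map, Sum.map_comp_map] using hP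

end CFDerives

namespace UPDA

open scoped Pointwise

variable {Q Γ : Type*} {M : UPDA Q Γ}

def PopsTo (M : UPDA Q Γ) (p : Q) (B : Γ) (s : Q) : Prop :=
  ∃ k, M.Reaches (p, 0, [B]) (s, k, [])

/-- `(q, A, false)` and `(q, A, true)` are the variables `[qA]_0` and `[qA]_1` of the paper. -/
inductive Production (M : UPDA Q Γ) : Q × Γ × Bool → List ((Q × Γ × Bool) ⊕ Unit) → Prop
  | pop {q A p} : .pop p ∈ M.δ q A → Production M (q, A, false) []
  | final {q A} : q ∈ M.final → Production M (q, A, true) []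
  | readA {q A p b} : .readA p ∈ M.δ q A → Production M (q, A, b) [.inr (), .inl (p, A, b)]
  | readE {q A p b} : .readE p ∈ M.δ q A → Production M (q, A, b) [.inl (p, A, b)]
  | push {q A p B s b} : .push p B ∈ M.δ q A → M.PopsTo p B s →
      Production M (q, A, b) [.inl (p, B, false), .inl (s, A, b)]
  | pushFinal {q A p B} : .push p B ∈ M.δ q A → Production M (q, A, true) [.inl (p, B, true)]

lemma Production.length_le {x rhs} (h : M.Production x rhs) : rhs.length ≤ 2 := by
  cases h <;> simp

def Goal (M : UPDA Q Γ) : Bool → Q → List Γ → Prop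
  | false, _, γ => γ = []
  | true, p, γ => p ∈ M.final ∧ γ ≠ []

/-- A unary language is recorded as its set of word lengths. -/
def lang (M : UPDA Q Γ) : Q × Γ × Bool → Set ℕ
  | (q, A, b) => {k | ∃ p γ, M.Reaches (q, 0, [A]) (p, k, γ) ∧ M.Goal b p γ}

noncomputable def formLang (M : UPDA Q Γ) (u : List ((Q × Γ × Bool) ⊕ Unit)) : Set ℕ :=
  (u.map (Sum.elim M.lang fun _ => {1})).sum

lemma add_mem_lang {q p A b d k} (h : M.Reaches (q, 0, [A]) (p, d, [A]))
    (hk : k ∈ M.lang (p, A, b)) : d + k ∈ M.lang (q, A, b) := by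
  obtain ⟨g, γ, hg, hgoal⟩ := hk
  exact ⟨g, γ, h.trans (hg.translate d), hgoal⟩

lemma formLang_subset_lang (hdet : M.Deterministic) {x rhs} (h : M.Production x rhs) :
    M.formLang rhs ⊆ M.lang x := by
  cases h <;> simp only [formLang, List.map_cons, List.map_nil, List.sum_cons, List.sum_nil,
    add_zero, Sum.elim_inl, Sum.elim_inr]
  case pop hm =>
    rintro _ rfl
    exact ⟨_, [], .single (.pop hm), rfl⟩
  case final hq =>
    rintro _ rfl
    exact ⟨_, _, .refl, hq, List.cons_ne_nil _ _⟩
  case readA hm =>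
    rintro _ ⟨_, rfl, k, hk, rfl⟩
    exact add_mem_lang (.single (.readA hm)) hk
  case readE hm =>
    intro k hk
    simpa using add_mem_lang (.single (.readE hm)) hk
  case push A p B s _ hm hs =>
    rintro _ ⟨k₁, ⟨r, γ, hr, rfl⟩, k₂, hk₂, rfl⟩
    obtain ⟨k, hs⟩ := hs
    obtain ⟨rfl, -⟩ := hr.eq_of_nil hdet hs
    exact add_mem_lang (.head (.push hm) (hr.append [A])) hk₂
  case pushFinal A p B hm =>
    rintro k ⟨g, γ, hg, hfin, -⟩
    exact ⟨g, γ ++ [A], .head (.push hm) (hg.append [A]), hfin, by simp⟩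

lemma formLang_subset_of_cfDerives (hdet : M.Deterministic) {u v}
    (h : CFDerives M.Production u v) : M.formLang v ⊆ M.formLang u := by
  induction h with
  | refl => exact subset_rfl
  | tail _ hstep ih =>
    obtain ⟨x, y, N, rhs, hP, rfl, rfl⟩ := hstep
    refine subset_trans ?_ ih
    simp only [formLang, List.map_append, List.sum_append, List.map_cons, List.sum_cons,
      Sum.elim_inl, add_assoc]
    exact Set.add_subset_add_left (Set.add_subset_add_right (formLang_subset_lang hdet hP))

lemma formLang_replicate (k : ℕ) : M.formLang (List.replicate k (.inr ())) = {k} := by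
  simp [formLang]

lemma mem_lang_of_cfDerives (hdet : M.Deterministic) {x k}
    (h : CFDerives M.Production [.inl x] (List.replicate k (.inr ()))) : k ∈ M.lang x := by
  simpa [formLang] using formLang_subset_of_cfDerives hdet h (by simp [formLang_replicate])

lemma cfDerives_of_reachesIn {t q A b p k γ} (hr : M.ReachesIn t (q, 0, [A]) (p, k, γ))
    (hg : M.Goal b p γ) :
    CFDerives M.Production [.inl (q, A, b)] (List.replicate k (.inr ())) := by
  induction t using Nat.strong_induction_on generalizing q A b p k γ with
  | _ t ih =>
  cases hr with
  | refl =>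
    cases b
    · exact absurd hg (List.cons_ne_nil _ _)
    · exact .single (.final hg.1)
  | @head _ _ _ t hs hr =>
    cases hs with
    | readA hm =>
      obtain ⟨d, rfl, hr⟩ := hr.exists_translate
      have hd := CFDerives.head (.readA hm)
        (.append (u := [.inr ()]) .refl (ih t (by omega) (hr 0) hg))
      simpa [add_comm, List.replicate_succ] using hd
    | readE hm => exact .head (.readE hm) (ih t (by omega) hr hg)
    | pop hm =>
      cases hr with
      | refl =>
        cases b
        · exact .single (.pop hm)
        · exact absurd rfl hg.2
      | head hs _ => cases hs
    | @push _ _ _ _ p' B hm =>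
      rcases hr.split_append (σ := [B]) (ρ := [A]) with
        ⟨τ, rfl, hB⟩ | ⟨t₁, t₂, s, k₁, ht, h₁, h₂⟩
      · cases b
        · exact absurd hg (by simp [Goal])
        rcases eq_or_ne τ [] with rfl | hτ
        · simpa using CFDerives.head (.push hm ⟨k, hB.reaches⟩)
            (.append (ih t (by omega) hB (b := false) rfl) (.single (.final hg.1)))
        · exact .head (.pushFinal hm) (ih t (by omega) hB ⟨hg.1, hτ⟩)
      · obtain ⟨d, rfl, h₂⟩ := h₂.exists_translate
        have hB := ih t₁ (by omega) h₁ (b := false) rfl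
        have hA := ih t₂ (by omega) (h₂ 0) hg
        rw [List.replicate_add]
        exact .head (.push hm ⟨k₁, h₁.reaches⟩) (.append hB (by simpa using hA))

theorem cfDerives_iff_mem_lang (hdet : M.Deterministic) {x k} :
    CFDerives M.Production [.inl x] (List.replicate k (.inr ())) ↔ k ∈ M.lang x := by
  refine ⟨mem_lang_of_cfDerives hdet, ?_⟩
  obtain ⟨q, A, b⟩ := x
  rintro ⟨p, γ, hr, hg⟩
  obtain ⟨t, ht⟩ := hr.exists_reachesIn
  exact cfDerives_of_reachesIn ht hg

lemma mem_lang_start_iff_accepts (hnf : M.NormalForm) {k} :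
    k ∈ M.lang (M.start, M.Z0, true) ↔ M.Accepts k :=
  ⟨fun ⟨p, γ, hr, hp, _⟩ => ⟨p, γ, hr, hp⟩,
    fun ⟨p, γ, hr, hp⟩ => ⟨p, γ, hr, hp, hr.stack_ne_nil (σ := []) hnf⟩⟩

end UPDA

/-- every unary dpda in normal form with `n` states and `m` stack
symbols, accepting by final states, is equivalent to a context-free grammar
(over the one-letter terminal alphabet) with at most `2nm` variables in which
every right-hand side has length at most `2`. -/
theorem stmt_17 {Q Γ : Type*} (M : UPDA Q Γ) (hdet : M.Deterministic)
    (hnf : M.NormalForm) [Fintype Q] [Fintype Γ] (n m : ℕ)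
    (hn : Fintype.card Q = n) (hm : Fintype.card Γ = m) :
    ∃ (V : Type) (_ : Fintype V) (P : V → List (V ⊕ Unit) → Prop) (S : V),
      Fintype.card V ≤ 2 * n * m ∧
      (∀ N rhs, P N rhs → rhs.length ≤ 2) ∧
      ∀ k : ℕ,
        (CFDerives P [Sum.inl S] (List.replicate k (Sum.inr ())) ↔
          M.Accepts k) := by
  let e := Fintype.equivFin (Q × Γ × Bool)
  refine ⟨_, inferInstance, fun N rhs => M.Production (e.symm N) (rhs.map (Sum.map e.symm id)),
    e (M.start, M.Z0, true), ?_, fun N rhs h => by simpa using h.length_le, fun k => ?_⟩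
  · simp only [Fintype.card_fin, Fintype.card_prod, Fintype.card_bool, hn, hm]
    linarith
  · have hrelabel := CFDerives.map_equiv_iff (P := M.Production) e
      (u := [.inl (M.start, M.Z0, true)]) (v := List.replicate k (.inr ()))
    simp only [List.map_cons, List.map_nil, List.map_replicate, Sum.map_inl, Sum.map_inr,
      id] at hrelabel
    rw [hrelabel, UPDA.cfDerives_iff_mem_lang hdet, UPDA.mem_lang_start_iff_accepts hnf]
end
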